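/- Let θ = Θ_S ∘ Λ_{π,t} be an automorphism of B_k and let σ_θ be the permutation of {1,…,2^k} such that (Φ_k(θ(a)))_i = ((Φ_k(a))_{σ_θ^{−1}(i)})^{p^t} for all a ∈ B_k. Define Ξ_θ : F_{p^r}^{n·2^k} → F_{p^r}^{n·2^k} by viewing a vector as n consecutive blocks y^{(1)},…,y^{(n)} of length 2^k, cyclically shifting the blocks by one block, and applying to each block y the map (y_j)_j ↦ ((y_{σ_θ^{−1}(j)})^{p^t})_j. Then for every B_k-submodule C of B_k^n, the set Φ̄_k(C) is fixed setwise by Ξ_θ if and only if C is a θ-cyclic code. -/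

import Mathlib

open MvPolynomial

set_option synthInstance.maxHeartbeats 400000
set_option maxHeartbeats 1000000

noncomputable def relIdeal (p r k : ℕ) [Fact p.Prime] : Ideal (MvPolynomial (Fin k) (GaloisField p r)) :=
  Ideal.span (Set.range fun i : Fin k => X i ^ 2 - X i)

abbrev B (p r k : ℕ) [Fact p.Prime] :=
  MvPolynomial (Fin k) (GaloisField p r) ⧸ relIdeal p r k

noncomputable def v (p r k : ℕ) [Fact p.Prime] (i : Fin k) : B p r k :=
  Ideal.Quotient.mk _ (X i)

lemma v_idem (p r k : ℕ) [Fact p.Prime] (i : Fin k) : v p r k i ^ 2 = v p r k i := by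
  have h : (X i ^ 2 - X i : MvPolynomial (Fin k) (GaloisField p r)) ∈ relIdeal p r k :=
    Ideal.subset_span ⟨i, rfl⟩
  have h2 := (Ideal.Quotient.eq_zero_iff_mem).mpr h
  rw [map_sub, map_pow] at h2
  have h3 := sub_eq_zero.mp h2
  simpa [v] using h3

lemma one_sub_v_idem (p r k : ℕ) [Fact p.Prime] (i : Fin k) :
    (1 - v p r k i) ^ 2 = 1 - v p r k i := by
  have h : (1 - v p r k i) ^ 2 = 1 - 2 * v p r k i + v p r k i ^ 2 := by ring
  rw [h, v_idem]; ring

noncomputable def ThAux (p r k : ℕ) [Fact p.Prime] (S : Finset (Fin k)) :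
    MvPolynomial (Fin k) (GaloisField p r) →+* B p r k :=
  (aeval (fun i : Fin k => if i ∈ S then 1 - v p r k i else v p r k i)).toRingHom

lemma ThAux_cond (p r k : ℕ) [Fact p.Prime] (S : Finset (Fin k)) :
    relIdeal p r k ≤ RingHom.ker (ThAux p r k S) := by
  refine Ideal.span_le.mpr ?_
  rintro _ ⟨i, rfl⟩
  simp only [SetLike.mem_coe, RingHom.mem_ker, ThAux, AlgHom.toRingHom_eq_coe,
    RingHom.coe_coe, map_sub, map_pow, aeval_X]
  by_cases h : i ∈ S
  · rw [if_pos h, one_sub_v_idem, sub_self]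
  · rw [if_neg h, v_idem, sub_self]

/-- The automorphism `Θ_S` of `B_k`, determined by `v_i ↦ 1 - v_i` for `i ∈ S` and
`v_i ↦ v_i` otherwise, fixing `F_{p^r}` pointwise. -/
noncomputable def Th (p r k : ℕ) [Fact p.Prime] (S : Finset (Fin k)) :
    B p r k →+* B p r k :=
  Ideal.Quotient.lift (relIdeal p r k) (ThAux p r k S) (fun _ ha => ThAux_cond p r k S ha)

noncomputable def LamAux (p r k : ℕ) [Fact p.Prime] (π : Equiv.Perm (Fin k)) (t : ℕ) :
    MvPolynomial (Fin k) (GaloisField p r) →+* B p r k :=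
  eval₂Hom ((Ideal.Quotient.mk (relIdeal p r k)).comp
      ((C : GaloisField p r →+* MvPolynomial (Fin k) (GaloisField p r)).comp
        (iterateFrobenius (GaloisField p r) p t)))
    (fun i => v p r k (π i))

lemma LamAux_cond (p r k : ℕ) [Fact p.Prime] (π : Equiv.Perm (Fin k)) (t : ℕ) :
    relIdeal p r k ≤ RingHom.ker (LamAux p r k π t) := by
  refine Ideal.span_le.mpr ?_
  rintro _ ⟨i, rfl⟩
  simp only [SetLike.mem_coe, RingHom.mem_ker, LamAux, map_sub, map_pow, eval₂Hom_X']
  rw [v_idem, sub_self]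

/-- The automorphism `Λ_{π,t}` of `B_k`, acting on `F_{p^r}` as the Frobenius power
`α ↦ α^{p^t}` and sending `v_i ↦ v_{π(i)}`. -/
noncomputable def Lam (p r k : ℕ) [Fact p.Prime] (π : Equiv.Perm (Fin k)) (t : ℕ) :
    B p r k →+* B p r k :=
  Ideal.Quotient.lift (relIdeal p r k) (LamAux p r k π t) (fun _ ha => LamAux_cond p r k π t ha)

noncomputable def PhiAux (p r k : ℕ) [Fact p.Prime] :
    MvPolynomial (Fin k) (GaloisField p r) →+* (Fin (2 ^ k) → GaloisField p r) :=
  Pi.ringHom fun j =>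
    eval₂Hom (RingHom.id (GaloisField p r))
      (fun i : Fin k => if Nat.testBit (j : ℕ) (i : ℕ) then 1 else 0)

lemma PhiAux_cond (p r k : ℕ) [Fact p.Prime] :
    relIdeal p r k ≤ RingHom.ker (PhiAux p r k) := by
  refine Ideal.span_le.mpr ?_
  rintro _ ⟨i, rfl⟩
  simp only [SetLike.mem_coe, RingHom.mem_ker, PhiAux]
  funext j
  show eval₂Hom (RingHom.id (GaloisField p r))
    (fun i : Fin k => if Nat.testBit (j : ℕ) (i : ℕ) then 1 else 0) (X i ^ 2 - X i) = 0
  simp only [Pi.ringHom_apply, map_sub, map_pow, eval₂Hom_X']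
  by_cases h : Nat.testBit (j : ℕ) (i : ℕ) <;> simp [h]

/-- The Gray map `Φ_k : B_k → F_{p^r}^{2^k}`: the coordinate indexed by `j` is the
evaluation of (a representative of) an element of `B_k` at the point whose `i`-th
coordinate is the `i`-th binary digit of `j`.  This agrees with the recursive
definition `Φ_k(α + β v_k) = (Φ_{k-1}(α), Φ_{k-1}(α + β))`, `Φ_0 = id`. -/
noncomputable def Phi (p r k : ℕ) [Fact p.Prime] :
    B p r k →+* (Fin (2 ^ k) → GaloisField p r) :=
  Ideal.Quotient.lift (relIdeal p r k) (PhiAux p r k) (fun _ ha => PhiAux_cond p r k ha)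

/-! With `e_j = ∏ᵢ (v_i if the i-th bit of j is 1, else 1 - v_i)` one has `∑ⱼ e_j = 1` and
`a e_j = Φ_k(a)_j e_j`, so `a = ∑ⱼ Φ_k(a)_j e_j` and `Φ_k` is injective; in particular `B_k` is
finite. The defining property of `σ_θ` says `Ξ_θ ∘ Φ̄_k = Φ̄_k ∘ T_θ`, hence `Ξ_θ(Φ̄_k C) = Φ̄_k C`
iff `T_θ(C) = C`. As `T_θ` is injective and `C` is finite, this means `T_θ(C) ⊆ C`. -/

theorem Set.Finite.image_eq_self_iff_mapsTo {α : Type*} {s : Set α} {f : α → α}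
    (hs : s.Finite) (hf : Set.InjOn f s) : f '' s = s ↔ Set.MapsTo f s s :=
  ⟨fun h => (Set.mapsTo_image f s).mono_right h.subset,
    fun hm => ((hs.injOn_iff_bijOn_of_mapsTo hm).mp hf).image_eq⟩

theorem Function.Semiconj.image_image_eq_iff_mapsTo {α β : Type*} {f : α → β} {g : α → α}
    {g' : β → β} {s : Set α} (h : Function.Semiconj f g g') (hf : Function.Injective f)
    (hg : Function.Injective g) (hs : s.Finite) :
    g' '' (f '' s) = f '' s ↔ Set.MapsTo g s s := by
  rw [← h.set_image s, hf.image_injective.eq_iff, hs.image_eq_self_iff_mapsTo hg.injOn]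

section GrayMap

variable (p r k : ℕ) [Fact p.Prime]

lemma Phi_mk_apply (f : MvPolynomial (Fin k) (GaloisField p r)) (j : Fin (2 ^ k)) :
    Phi p r k (Ideal.Quotient.mk _ f) j =
      eval (fun i : Fin k => if (j : ℕ).testBit i then 1 else 0) f :=
  rfl

lemma Phi_v (i : Fin k) (j : Fin (2 ^ k)) :
    Phi p r k (v p r k i) j = if (j : ℕ).testBit i then 1 else 0 := by
  simp [v, Phi_mk_apply]

lemma Phi_algebraMap (c : GaloisField p r) (j : Fin (2 ^ k)) :
    Phi p r k (algebraMap (GaloisField p r) (B p r k) c) j = c := by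
  rw [← Ideal.Quotient.mk_algebraMap, Phi_mk_apply, MvPolynomial.algebraMap_eq, eval_C]

noncomputable def pointIdem (j : Fin (2 ^ k)) : B p r k :=
  ∏ i : Fin k, if (j : ℕ).testBit i then v p r k i else 1 - v p r k i

lemma v_mul_pointIdem (i : Fin k) (j : Fin (2 ^ k)) :
    v p r k i * pointIdem p r k j = if (j : ℕ).testBit i then pointIdem p r k j else 0 := by
  have hv : v p r k i * v p r k i = v p r k i := by rw [← sq, v_idem]
  unfold pointIdem
  rw [← Finset.mul_prod_erase Finset.univ _ (Finset.mem_univ i), ← mul_assoc]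
  split_ifs
  · rw [hv]
  · rw [mul_sub, mul_one, hv, sub_self, zero_mul]

lemma mul_pointIdem (a : B p r k) (j : Fin (2 ^ k)) :
    a * pointIdem p r k j = Phi p r k a j • pointIdem p r k j := by
  obtain ⟨f, rfl⟩ := Ideal.Quotient.mk_surjective a
  induction f using MvPolynomial.induction_on with
  | C c =>
    rw [← MvPolynomial.algebraMap_eq, Ideal.Quotient.mk_algebraMap, Phi_algebraMap]
    exact (Algebra.smul_def _ _).symm
  | add f g hf hg => rw [map_add, add_mul, hf, hg, map_add, Pi.add_apply, add_smul]
  | mul_X f i hf =>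
    rw [map_mul, map_mul, Pi.mul_apply, mul_smul, mul_assoc]
    change _ * (v p r k i * _) = _ • (Phi p r k (v p r k i) j • _)
    rw [v_mul_pointIdem, Phi_v]
    split_ifs
    · rw [hf, one_smul]
    · rw [mul_zero, zero_smul, smul_zero]

lemma testBit_injective :
    Function.Injective fun (j : Fin (2 ^ k)) (i : Fin k) => (j : ℕ).testBit i := by
  refine fun a b h => Fin.ext (Nat.eq_of_testBit_eq fun i => ?_)
  by_cases hi : i < k
  · exact congrFun h ⟨i, hi⟩
  · have hk : 2 ^ k ≤ 2 ^ i := Nat.pow_le_pow_right two_pos (not_lt.mp hi)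
    rw [Nat.testBit_lt_two_pow (a.isLt.trans_le hk), Nat.testBit_lt_two_pow (b.isLt.trans_le hk)]

noncomputable def testBitEquiv : Fin (2 ^ k) ≃ (Fin k → Bool) :=
  Equiv.ofBijective _ ((Fintype.bijective_iff_injective_and_card _).mpr
    ⟨testBit_injective k, by simp⟩)

lemma sum_pointIdem : ∑ j : Fin (2 ^ k), pointIdem p r k j = 1 := by
  rw [Fintype.sum_equiv (testBitEquiv k) (pointIdem p r k)
    (fun g => ∏ i : Fin k, if g i then v p r k i else 1 - v p r k i) fun _ => rfl,
    ← Fintype.prod_sum fun i (b : Bool) => if b then v p r k i else 1 - v p r k i]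
  simp

lemma eq_sum_Phi_smul_pointIdem (a : B p r k) :
    a = ∑ j : Fin (2 ^ k), Phi p r k a j • pointIdem p r k j := by
  simp_rw [← mul_pointIdem, ← Finset.mul_sum, sum_pointIdem, mul_one]

lemma Phi_injective : Function.Injective (Phi p r k) := fun a b h => by
  rw [eq_sum_Phi_smul_pointIdem p r k a, eq_sum_Phi_smul_pointIdem p r k b, h]

lemma injective_of_Phi_eq_pow_comp {θ : B p r k → B p r k} {σ : Equiv.Perm (Fin (2 ^ k))} {t : ℕ}
    (hθ : ∀ a i, Phi p r k (θ a) i = Phi p r k a (σ.symm i) ^ p ^ t) :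
    Function.Injective θ := fun a b h => Phi_injective p r k <| funext fun j => by
  have hj := congrArg (fun x => Phi p r k x (σ j)) h
  simp only [hθ, Equiv.symm_apply_apply] at hj
  exact (iterateFrobenius (GaloisField p r) p t).injective hj

end GrayMap

theorem stmt_14_general (p r k n : ℕ) [Fact p.Prime] [NeZero n]
    (S : Finset (Fin k)) (π : Equiv.Perm (Fin k)) (t : ℕ)
    (σ : Equiv.Perm (Fin (2 ^ k)))
    (hσ : ∀ (a : B p r k) (i : Fin (2 ^ k)),
      Phi p r k (Th p r k S (Lam p r k π t a)) i = Phi p r k a (σ.symm i) ^ p ^ t)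
    (C : Submodule (B p r k) (Fin n → B p r k)) :
    (fun y : Fin n → Fin (2 ^ k) → GaloisField p r =>
        fun b j => y (b - 1) (σ.symm j) ^ p ^ t) ''
          ((fun a : Fin n → B p r k => fun b => Phi p r k (a b)) ''
            (C : Set (Fin n → B p r k))) =
        (fun a : Fin n → B p r k => fun b => Phi p r k (a b)) ''
          (C : Set (Fin n → B p r k)) ↔
      ∀ c ∈ C, (fun b : Fin n => Th p r k S (Lam p r k π t (c (b - 1)))) ∈ C := by
  have : Finite (B p r k) := .of_injective _ (Phi_injective p r k)
  have hθ := injective_of_Phi_eq_pow_comp p r k hσ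
  refine Function.Semiconj.image_image_eq_iff_mapsTo (fun c => funext₂ fun b j => hσ _ j)
    (Phi_injective p r k).comp_left ?_ (Set.toFinite _)
  exact hθ.comp_left.comp (Equiv.subRight (1 : Fin n)).surjective.injective_comp_right

/-- Let `θ = Θ_S ∘ Λ_{π,t}` and let `σ_θ` be the permutation of `{1,…,2^k}` with
`Φ_k(θ(a))_i = (Φ_k(a)_{σ_θ⁻¹(i)})^{p^t}`.  Let `Ξ_θ` act on `F_{p^r}^{n·2^k}`
(viewed as `n` blocks of length `2^k`) by cyclically shifting the blocks by one block and
applying `y ↦ ((y_{σ_θ⁻¹(j)})^{p^t})_j` to each block.  Then for a `B_k`-submodule `C` of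
`B_k^n`, the image `Φ̄_k(C)` is fixed setwise by `Ξ_θ` iff `C` is `θ`-cyclic. -/
theorem stmt_14 (p r k n : ℕ) [Fact p.Prime] [NeZero n] (hr : 1 ≤ r)
    (S : Finset (Fin k)) (π : Equiv.Perm (Fin k)) (t : ℕ) (ht : t < r)
    (σ : Equiv.Perm (Fin (2 ^ k)))
    (hσ : ∀ (a : B p r k) (i : Fin (2 ^ k)),
      Phi p r k (Th p r k S (Lam p r k π t a)) i = Phi p r k a (σ.symm i) ^ p ^ t)
    (C : Submodule (B p r k) (Fin n → B p r k)) :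
    (fun y : Fin n → Fin (2 ^ k) → GaloisField p r =>
        fun b j => y (b - 1) (σ.symm j) ^ p ^ t) ''
          ((fun a : Fin n → B p r k => fun b => Phi p r k (a b)) ''
            (C : Set (Fin n → B p r k))) =
        (fun a : Fin n → B p r k => fun b => Phi p r k (a b)) ''
          (C : Set (Fin n → B p r k)) ↔
      ∀ c ∈ C, (fun b : Fin n => Th p r k S (Lam p r k π t (c (b - 1)))) ∈ C :=
  stmt_14_general p r k n S π t σ hσ C
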